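/- Let ℓ : Δ² → [0,∞)² be an admissible (ℓ ∈ 𝓛) proper binary loss function with local expression ℓ̃(t) = ℓ(t, 1−t). If ℓ is mixable, then its mixability constant is η*_ℓ = inf_{t ∈ (0,1)} |(ℓ̃₁'(t)ℓ̃₂''(t) − ℓ̃₂'(t)ℓ̃₁''(t)) / (ℓ̃₁'(t)·ℓ̃₂'(t)·(ℓ̃₁'(t) − ℓ̃₂'(t)))|. Conversely, if this infimum is positive, then ℓ is mixable with mixability constant equal to it. In particular, for η > 0, E_η(spr(ℓ)) is convex if and only if η ≤ inf_{t ∈ (0,1)} |(ℓ̃₁'(t)ℓ̃₂''(t) − ℓ̃₂'(t)ℓ̃₁''(t)) / (ℓ̃₁'(t)·ℓ̃₂'(t)·(ℓ̃₁'(t) − ℓ̃₂'(t)))|. -/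

import Mathlib

open Real Set Filter
open Topology

noncomputable section

/-- The probability simplex Δ² ⊆ ℝ². -/
def simplex2 : Set (Fin 2 → ℝ) := {p | (∀ i, 0 ≤ p i) ∧ ∑ i, p i = 1}

/-- The relative interior of Δ². -/
def relint2 : Set (Fin 2 → ℝ) := {p | (∀ i, 0 < p i) ∧ ∑ i, p i = 1}

/-- Properness of a binary loss. -/
def IsProper2 (ℓ : (Fin 2 → ℝ) → Fin 2 → ℝ) : Prop :=
  ∀ p ∈ simplex2, ∀ q ∈ simplex2, ∑ i, ℓ p i * p i ≤ ∑ i, ℓ q i * p i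

/-- Strict properness of a binary loss. -/
def IsStrictlyProper2 (ℓ : (Fin 2 → ℝ) → Fin 2 → ℝ) : Prop :=
  IsProper2 ℓ ∧ ∀ p ∈ simplex2, ∀ q ∈ simplex2, q ≠ p →
    ∑ i, ℓ p i * p i < ∑ i, ℓ q i * p i

/-- The local expression `ℓ̃ᵢ(t) = ℓᵢ(t, 1−t)` in the standard parametrization. -/
def tl (ℓ : (Fin 2 → ℝ) → Fin 2 → ℝ) (i : Fin 2) : ℝ → ℝ := fun t => ℓ ![t, 1 - t] i

/-- Admissibility (membership in 𝓛): `ℓ̃` is C² on (0,1) and `ℓ̃₁'·ℓ̃₂' < 0` there. -/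
def IsAdmissible2 (ℓ : (Fin 2 → ℝ) → Fin 2 → ℝ) : Prop :=
  ContDiffOn ℝ 2 (tl ℓ 0) (Set.Ioo 0 1) ∧ ContDiffOn ℝ 2 (tl ℓ 1) (Set.Ioo 0 1) ∧
    ∀ t ∈ Set.Ioo (0 : ℝ) 1, deriv (tl ℓ 0) t * deriv (tl ℓ 1) t < 0

/-- Curvature of the loss curve with respect to the unit normal pointing towards the
positive quadrant:
`κ⁺_ℓ(t) = sgn(ℓ̃₁')·(ℓ̃₁'ℓ̃₂'' − ℓ̃₁''ℓ̃₂')/(ℓ̃₁'² + ℓ̃₂'²)^{3/2}`. -/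
def kplus (ℓ : (Fin 2 → ℝ) → Fin 2 → ℝ) (t : ℝ) : ℝ :=
  Real.sign (deriv (tl ℓ 0) t) *
    (deriv (tl ℓ 0) t * deriv (deriv (tl ℓ 1)) t -
      deriv (deriv (tl ℓ 0)) t * deriv (tl ℓ 1) t) /
    ((deriv (tl ℓ 0) t) ^ 2 + (deriv (tl ℓ 1) t) ^ 2) ^ ((3 : ℝ) / 2)

/-- Curvature of the log loss curve: `κ⁺_log(t) = t(1−t)/(t² + (1−t)²)^{3/2}`. -/
def klog (t : ℝ) : ℝ := t * (1 - t) / (t ^ 2 + (1 - t) ^ 2) ^ ((3 : ℝ) / 2)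

/-- Superprediction set of a binary loss. -/
def spr2 (ℓ : (Fin 2 → ℝ) → Fin 2 → ℝ) : Set (Fin 2 → ℝ) :=
  {x | (∀ i, 0 ≤ x i) ∧ ∃ q ∈ simplex2, ∀ i, ℓ q i ≤ x i}

/-- The η-exponential projection on ℝ². -/
def Eproj2 (η : ℝ) (y : Fin 2 → ℝ) : Fin 2 → ℝ := fun i => Real.exp (-η * y i)

/-- η-mixability of a binary loss. -/
def IsMixable2 (η : ℝ) (ℓ : (Fin 2 → ℝ) → Fin 2 → ℝ) : Prop :=
  Convex ℝ (Eproj2 η '' spr2 ℓ)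

/-- The quantity
`|(ℓ̃₁'ℓ̃₂'' − ℓ̃₂'ℓ̃₁'') / (ℓ̃₁'·ℓ̃₂'·(ℓ̃₁' − ℓ̃₂'))|` appearing in the mixability constant. -/
def mixRatio (ℓ : (Fin 2 → ℝ) → Fin 2 → ℝ) (t : ℝ) : ℝ :=
  |(deriv (tl ℓ 0) t * deriv (deriv (tl ℓ 1)) t -
      deriv (tl ℓ 1) t * deriv (deriv (tl ℓ 0)) t) /
    (deriv (tl ℓ 0) t * deriv (tl ℓ 1) t * (deriv (tl ℓ 0) t - deriv (tl ℓ 1) t))|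

structure Core (f g : ℝ → ℝ) : Prop where
  cf : ContDiffOn ℝ 2 f (Set.Ioo 0 1)
  cg : ContDiffOn ℝ 2 g (Set.Ioo 0 1)
  f0 : ∀ t ∈ Set.Ioo (0:ℝ) 1, 0 ≤ f t
  g0 : ∀ t ∈ Set.Ioo (0:ℝ) 1, 0 ≤ g t
  prop : ∀ t ∈ Set.Ioo (0:ℝ) 1, ∀ s ∈ Set.Ioo (0:ℝ) 1,
    t * f t + (1-t) * g t ≤ t * f s + (1-t) * g s
  mix : ∀ t ∈ Set.Ioo (0:ℝ) 1, deriv f t * deriv g t < 0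

namespace Core

variable {f g : ℝ → ℝ}

lemma d1f (hc : Core f g) : ∀ t ∈ Set.Ioo (0:ℝ) 1, HasDerivAt f (deriv f t) t := fun t ht =>
  ((hc.cf.differentiableOn (by norm_num)).differentiableAt
    (Ioo_mem_nhds ht.1 ht.2)).hasDerivAt

lemma d1g (hc : Core f g) : ∀ t ∈ Set.Ioo (0:ℝ) 1, HasDerivAt g (deriv g t) t := fun t ht =>
  ((hc.cg.differentiableOn (by norm_num)).differentiableAt
    (Ioo_mem_nhds ht.1 ht.2)).hasDerivAt

lemma d2f (hc : Core f g) : ∀ t ∈ Set.Ioo (0:ℝ) 1,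
    HasDerivAt (deriv f) (deriv (deriv f) t) t := fun t ht =>
  (((hc.cf.deriv_of_isOpen (m := 1) isOpen_Ioo (by norm_num)).differentiableOn
    (by norm_num)).differentiableAt (Ioo_mem_nhds ht.1 ht.2)).hasDerivAt

lemma d2g (hc : Core f g) : ∀ t ∈ Set.Ioo (0:ℝ) 1,
    HasDerivAt (deriv g) (deriv (deriv g) t) t := fun t ht =>
  (((hc.cg.deriv_of_isOpen (m := 1) isOpen_Ioo (by norm_num)).differentiableOn
    (by norm_num)).differentiableAt (Ioo_mem_nhds ht.1 ht.2)).hasDerivAt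

lemma contf (hc : Core f g) : ContinuousOn f (Set.Ioo 0 1) := hc.cf.continuousOn
lemma contg (hc : Core f g) : ContinuousOn g (Set.Ioo 0 1) := hc.cg.continuousOn

lemma contdf (hc : Core f g) : ContinuousOn (deriv f) (Set.Ioo 0 1) :=
  hc.cf.continuousOn_deriv_of_isOpen isOpen_Ioo (by norm_num)
lemma contdg (hc : Core f g) : ContinuousOn (deriv g) (Set.Ioo 0 1) :=
  hc.cg.continuousOn_deriv_of_isOpen isOpen_Ioo (by norm_num)

/-- Stationarity: `t f'(t) + (1-t) g'(t) = 0`. -/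
lemma stat (hc : Core f g) : ∀ t ∈ Set.Ioo (0:ℝ) 1,
    t * deriv f t + (1-t) * deriv g t = 0 := by
  intro t ht
  have hmin : IsLocalMin (fun s => t * f s + (1-t) * g s) t := by
    filter_upwards [Ioo_mem_nhds ht.1 ht.2] with s hs
    exact hc.prop t ht s hs
  have hd : HasDerivAt (fun s => t * f s + (1-t) * g s)
      (t * deriv f t + (1-t) * deriv g t) t :=
    ((hc.d1f t ht).const_mul t).add ((hc.d1g t ht).const_mul (1-t))
  have h0 := hmin.deriv_eq_zero
  rwa [hd.deriv] at h0

lemma fg_anti (hc : Core f g) : ∀ s ∈ Set.Ioo (0:ℝ) 1, ∀ t ∈ Set.Ioo (0:ℝ) 1, s ≤ t →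
    f t - g t ≤ f s - g s := by
  intro s hs t ht hst
  rcases eq_or_lt_of_le hst with rfl | h
  · exact le_refl _
  · have h1 := hc.prop t ht s hs
    have h2 := hc.prop s hs t ht
    nlinarith [h1, h2, h]

lemma deriv_le (hc : Core f g) : ∀ t ∈ Set.Ioo (0:ℝ) 1, deriv f t ≤ deriv g t := by
  intro t ht
  have hd : HasDerivAt (fun s => f s - g s) (deriv f t - deriv g t) t :=
    (hc.d1f t ht).sub (hc.d1g t ht)
  have hs := hasDerivAt_iff_tendsto_slope.mp hd
  have hs' : Tendsto (slope (fun s => f s - g s) t) (𝓝[>] t)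
      (𝓝 (deriv f t - deriv g t)) :=
    hs.mono_left (nhdsWithin_mono _ fun x hx => ne_of_gt hx)
  have hle : ∀ᶠ x in 𝓝[>] t, slope (fun s => f s - g s) t x ≤ 0 := by
    filter_upwards [Ioo_mem_nhdsGT_of_mem ⟨le_refl t, ht.2⟩, self_mem_nhdsWithin]
      with x hx hx'
    have hxI : x ∈ Set.Ioo (0:ℝ) 1 := ⟨lt_trans ht.1 hx', hx.2⟩
    have := hc.fg_anti t ht x hxI (le_of_lt hx')
    rw [slope_def_field]
    have hxt : (0:ℝ) < x - t := sub_pos.mpr hx'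
    exact div_nonpos_iff.mpr (Or.inr ⟨by linarith, by linarith⟩)
  have : deriv f t - deriv g t ≤ 0 := le_of_tendsto hs' hle
  linarith

lemma dfneg (hc : Core f g) : ∀ t ∈ Set.Ioo (0:ℝ) 1, deriv f t < 0 := by
  intro t ht
  rcases mul_neg_iff.mp (hc.mix t ht) with ⟨h1, h2⟩ | ⟨h1, h2⟩
  · exact absurd (hc.deriv_le t ht) (by nlinarith)
  · exact h1

lemma dgpos (hc : Core f g) : ∀ t ∈ Set.Ioo (0:ℝ) 1, 0 < deriv g t := by
  intro t ht
  rcases mul_neg_iff.mp (hc.mix t ht) with ⟨h1, h2⟩ | ⟨h1, h2⟩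
  · exact absurd (hc.deriv_le t ht) (by nlinarith)
  · exact h2

/-- Differentiated stationarity: `f' + t f'' - g' + (1-t) g'' = 0`. -/
lemma stat' (hc : Core f g) : ∀ t ∈ Set.Ioo (0:ℝ) 1,
    deriv f t + t * deriv (deriv f) t - deriv g t + (1-t) * deriv (deriv g) t = 0 := by
  intro t ht
  have hd : HasDerivAt (fun s => s * deriv f s + (1-s) * deriv g s)
      (deriv f t + t * deriv (deriv f) t +
        (-deriv g t + (1-t) * deriv (deriv g) t)) t := by
    have h1 : HasDerivAt (fun s => s * deriv f s)
        (1 * deriv f t + t * deriv (deriv f) t) t :=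
      (hasDerivAt_id t).mul (hc.d2f t ht)
    have h2 : HasDerivAt (fun s : ℝ => 1 - s) (-1) t := by
      simpa using (hasDerivAt_id' t).const_sub (1:ℝ)
    have h3 : HasDerivAt (fun s => (1-s) * deriv g s)
        ((-1) * deriv g t + (1-t) * deriv (deriv g) t) t :=
      h2.mul (hc.d2g t ht)
    refine (h1.add h3).congr_deriv ?_
    ring
  have heq : (fun s => s * deriv f s + (1-s) * deriv g s) =ᶠ[𝓝 t] fun _ => (0:ℝ) := by
    filter_upwards [Ioo_mem_nhds ht.1 ht.2] with s hs
    exact hc.stat s hs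
  have h0 : deriv (fun s => s * deriv f s + (1-s) * deriv g s) t = 0 := by
    rw [heq.deriv_eq]; exact deriv_const _ _
  rw [hd.deriv] at h0
  linarith

lemma fanti (hc : Core f g) : StrictAntiOn f (Set.Ioo 0 1) := by
  apply strictAntiOn_of_deriv_neg (convex_Ioo 0 1) hc.contf
  intro t ht
  rw [interior_Ioo] at ht
  exact hc.dfneg t ht

lemma gmono (hc : Core f g) : StrictMonoOn g (Set.Ioo 0 1) := by
  apply strictMonoOn_of_deriv_pos (convex_Ioo 0 1) hc.contg
  intro t ht
  rw [interior_Ioo] at ht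
  exact hc.dgpos t ht

end Core

/-- `E`-curve component: `t ↦ exp (-η f t)`. -/
def Ec (η : ℝ) (f : ℝ → ℝ) (t : ℝ) : ℝ := Real.exp (-η * f t)

/-- slope of the exponentiated curve. -/
def mm (η : ℝ) (f g : ℝ → ℝ) (r : ℝ) : ℝ :=
  (deriv g r * Ec η g r) / (deriv f r * Ec η f r)

namespace Core
variable {f g : ℝ → ℝ} {η : ℝ}

lemma Ec_pos (t : ℝ) : 0 < Ec η f t := Real.exp_pos _

lemma Ec_le_one (hη : 0 < η) (h0 : 0 ≤ f t) : Ec η f t ≤ 1 := by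
  rw [Ec, Real.exp_le_one_iff]
  nlinarith

lemma hasDerivAt_Ec (hc : Core f g) (hη : 0 < η) {t : ℝ} (ht : t ∈ Set.Ioo (0:ℝ) 1) :
    HasDerivAt (Ec η f) (-η * deriv f t * Ec η f t) t := by
  have h1 : HasDerivAt (fun s => -η * f s) (-η * deriv f t) t := (hc.d1f t ht).const_mul _
  have h3 : Ec η f = fun s => Real.exp (-η * f s) := rfl
  rw [h3]
  convert h1.exp using 1
  ring

lemma hasDerivAt_Ec' (hc : Core f g) (hη : 0 < η) {t : ℝ} (ht : t ∈ Set.Ioo (0:ℝ) 1) :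
    HasDerivAt (Ec η g) (-η * deriv g t * Ec η g t) t := by
  have h1 : HasDerivAt (fun s => -η * g s) (-η * deriv g t) t := (hc.d1g t ht).const_mul _
  have h3 : Ec η g = fun s => Real.exp (-η * g s) := rfl
  rw [h3]
  convert h1.exp using 1
  ring

lemma contEcf (hc : Core f g) : ContinuousOn (Ec η f) (Set.Ioo 0 1) :=
  Real.continuous_exp.comp_continuousOn (hc.contf.const_smul (-η) : )

lemma contEcg (hc : Core f g) : ContinuousOn (Ec η g) (Set.Ioo 0 1) :=
  Real.continuous_exp.comp_continuousOn (hc.contg.const_smul (-η) : )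

lemma den_ne (hc : Core f g) {t : ℝ} (ht : t ∈ Set.Ioo (0:ℝ) 1) :
    deriv f t * Ec η f t ≠ 0 :=
  ne_of_lt (mul_neg_of_neg_of_pos (hc.dfneg t ht) (Ec_pos t))

lemma mm_neg (hc : Core f g) {t : ℝ} (ht : t ∈ Set.Ioo (0:ℝ) 1) : mm η f g t < 0 :=
  div_neg_of_pos_of_neg (mul_pos (hc.dgpos t ht) (Ec_pos t))
    (mul_neg_of_neg_of_pos (hc.dfneg t ht) (Ec_pos t))

lemma hasDerivAt_mm (hc : Core f g) (hη : 0 < η) {t : ℝ} (ht : t ∈ Set.Ioo (0:ℝ) 1) :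
    HasDerivAt (mm η f g)
      (((deriv (deriv g) t * Ec η g t + deriv g t * (-η * deriv g t * Ec η g t)) *
          (deriv f t * Ec η f t) -
        (deriv g t * Ec η g t) *
          (deriv (deriv f) t * Ec η f t + deriv f t * (-η * deriv f t * Ec η f t))) /
        (deriv f t * Ec η f t)^2) t := by
  have hnum : HasDerivAt (fun s => deriv g s * Ec η g s)
      (deriv (deriv g) t * Ec η g t + deriv g t * (-η * deriv g t * Ec η g t)) t :=
    (hc.d2g t ht).mul (hc.hasDerivAt_Ec' hη ht)
  have hden : HasDerivAt (fun s => deriv f s * Ec η f s)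
      (deriv (deriv f) t * Ec η f t + deriv f t * (-η * deriv f t * Ec η f t)) t :=
    (hc.d2f t ht).mul (hc.hasDerivAt_Ec hη ht)
  exact hnum.div hden (hc.den_ne ht)

lemma deriv_mm_nonpos (hc : Core f g) (hη : 0 < η)
    (hmix : ∀ t ∈ Set.Ioo (0:ℝ) 1, η * ((1-t) * deriv g t) ≤ 1)
    {t : ℝ} (ht : t ∈ Set.Ioo (0:ℝ) 1) : deriv (mm η f g) t ≤ 0 := by
  rw [(hc.hasDerivAt_mm hη ht).deriv]
  set a := deriv f t with ha
  set b := deriv g t with hb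
  set A := deriv (deriv f) t with hA
  set B := deriv (deriv g) t with hB
  set u := Ec η f t with hu
  set v := Ec η g t with hv
  have hupos : 0 < u := Ec_pos t
  have hvpos : 0 < v := Ec_pos t
  have haneg : a < 0 := hc.dfneg t ht
  have hbpos : 0 < b := hc.dgpos t ht
  have hab : a < b := lt_trans haneg hbpos
  have h1t : 0 < 1 - t := by linarith [ht.2]
  have hid1 : t * a + (1-t) * b = 0 := hc.stat t ht
  have hid2 : a + t * A - b + (1-t) * B = 0 := hc.stat' t ht
  have key : (1-t) * (a*B - b*A) = a*(b - a) := by linear_combination a * hid2 - A * hid1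
  have hbr : 1 - η * b * (1-t) ≥ 0 := by nlinarith [hmix t ht]
  apply div_nonpos_iff.mpr
  apply Or.inr
  constructor
  · -- numerator ≤ 0
    have hN : (B * v + b * (-η * b * v)) * (a * u) - (b * v) * (A * u + a * (-η * a * u))
        = u * v * ((a*B - b*A) - η * a * b * (b - a)) := by ring
    rw [hN]
    have h2 : (1-t) * ((a*B - b*A) - η * a * b * (b - a))
        = a * (b - a) * (1 - η * b * (1-t)) := by linear_combination key
    have h4 : 0 ≤ (-a) * (b - a) * (1 - η * b * (1-t)) :=
      mul_nonneg (mul_nonneg (by linarith) (by linarith)) hbr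
    have h3 : (a*B - b*A) - η * a * b * (b - a) ≤ 0 := by nlinarith [h4, h2, h1t]
    nlinarith [mul_pos hupos hvpos]
  · positivity

lemma contmm (hc : Core f g) : ContinuousOn (mm η f g) (Set.Ioo 0 1) :=
  ((hc.contdg.mul hc.contEcg).div (hc.contdf.mul hc.contEcf)) (fun t ht => hc.den_ne ht)

lemma mm_anti (hc : Core f g) (hη : 0 < η)
    (hmix : ∀ t ∈ Set.Ioo (0:ℝ) 1, η * ((1-t) * deriv g t) ≤ 1) :
    AntitoneOn (mm η f g) (Set.Ioo 0 1) := by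
  apply antitoneOn_of_deriv_nonpos (convex_Ioo 0 1) (hc.contmm)
  · intro t ht
    rw [interior_Ioo] at ht
    exact (hc.hasDerivAt_mm hη ht).differentiableAt.differentiableWithinAt
  · intro t ht
    rw [interior_Ioo] at ht
    exact hc.deriv_mm_nonpos hη hmix ht

/-- The tangent line at `r` dominates the exponentiated curve. -/
lemma tangent_curve (hc : Core f g) (hη : 0 < η)
    (hmix : ∀ t ∈ Set.Ioo (0:ℝ) 1, η * ((1-t) * deriv g t) ≤ 1)
    {r s : ℝ} (hr : r ∈ Set.Ioo (0:ℝ) 1) (hs : s ∈ Set.Ioo (0:ℝ) 1) :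
    Ec η g s ≤ Ec η g r + mm η f g r * (Ec η f s - Ec η f r) := by
  set c := mm η f g r with hc'
  set ψ : ℝ → ℝ := fun x => Ec η g x - c * Ec η f x with hψ
  have hψd : ∀ x ∈ Set.Ioo (0:ℝ) 1,
      HasDerivAt ψ (η * (deriv f x * Ec η f x) * (c - mm η f g x)) x := by
    intro x hx
    have h1 : HasDerivAt ψ
        (-η * deriv g x * Ec η g x - c * (-η * deriv f x * Ec η f x)) x :=
      (hc.hasDerivAt_Ec' hη hx).sub ((hc.hasDerivAt_Ec hη hx).const_mul c)
    convert h1 using 1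
    have hne := hc.den_ne (η := η) hx
    have hne1 : deriv f x ≠ 0 := (hc.dfneg x hx).ne
    have hne2 : Ec η f x ≠ 0 := (Ec_pos x).ne'
    rw [mm]
    field_simp
    ring
  have hcontψ : ContinuousOn ψ (Set.Ioo 0 1) :=
    hc.contEcg.sub (continuousOn_const.mul hc.contEcf)
  have hkey : ψ s ≤ ψ r := by
    rcases le_total s r with hsr | hrs
    · have hmono : MonotoneOn ψ (Set.Icc s r) := by
        have hsub : Set.Icc s r ⊆ Set.Ioo (0:ℝ) 1 := fun x hx =>
          ⟨lt_of_lt_of_le hs.1 hx.1, lt_of_le_of_lt hx.2 hr.2⟩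
        apply monotoneOn_of_deriv_nonneg (convex_Icc s r) (hcontψ.mono hsub)
        · intro x hx
          rw [interior_Icc] at hx
          exact (hψd x (hsub (Set.mem_Icc_of_Ioo hx))).differentiableAt.differentiableWithinAt
        · intro x hx
          rw [interior_Icc] at hx
          have hxI := hsub (Set.mem_Icc_of_Ioo hx)
          rw [(hψd x hxI).deriv]
          have h2 : c ≤ mm η f g x := hc.mm_anti hη hmix hxI hr (le_of_lt hx.2)
          have h3 : deriv f x * Ec η f x < 0 :=
            mul_neg_of_neg_of_pos (hc.dfneg x hxI) (Ec_pos x)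
          nlinarith [mul_nonneg (neg_nonneg.mpr (le_of_lt h3))
            (neg_nonneg.mpr (show c - mm η f g x ≤ 0 by linarith)), hη]
      have := hmono (Set.left_mem_Icc.mpr hsr) (Set.right_mem_Icc.mpr hsr) hsr
      simpa [hψ] using this
    · have hanti : AntitoneOn ψ (Set.Icc r s) := by
        have hsub : Set.Icc r s ⊆ Set.Ioo (0:ℝ) 1 := fun x hx =>
          ⟨lt_of_lt_of_le hr.1 hx.1, lt_of_le_of_lt hx.2 hs.2⟩
        apply antitoneOn_of_deriv_nonpos (convex_Icc r s) (hcontψ.mono hsub)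
        · intro x hx
          rw [interior_Icc] at hx
          exact (hψd x (hsub (Set.mem_Icc_of_Ioo hx))).differentiableAt.differentiableWithinAt
        · intro x hx
          rw [interior_Icc] at hx
          have hxI := hsub (Set.mem_Icc_of_Ioo hx)
          rw [(hψd x hxI).deriv]
          have h2 : mm η f g x ≤ c := hc.mm_anti hη hmix hr hxI (le_of_lt hx.1)
          have h3 : deriv f x * Ec η f x < 0 :=
            mul_neg_of_neg_of_pos (hc.dfneg x hxI) (Ec_pos x)
          nlinarith [mul_nonneg (neg_nonneg.mpr (le_of_lt h3))
            (show 0 ≤ c - mm η f g x by linarith), hη]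
      have := hanti (Set.left_mem_Icc.mpr hrs) (Set.right_mem_Icc.mpr hrs) hrs
      simpa [hψ] using this
  simp only [hψ] at hkey
  linarith

section Support

variable {x₀ x₁ : ℝ}

lemma support_or (hc : Core f g)
    (hx : ∀ s ∈ Set.Ioo (0:ℝ) 1, s * f s + (1-s) * g s ≤ s * x₀ + (1-s) * x₁) :
    ∀ s ∈ Set.Ioo (0:ℝ) 1, f s ≤ x₀ ∨ g s ≤ x₁ := by
  intro s hs
  by_contra h
  push_neg at h
  have h1 := hx s hs
  nlinarith [h.1, h.2, hs.1, hs.2, mul_lt_mul_of_pos_left h.1 hs.1,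
    mul_lt_mul_of_pos_left h.2 (show (0:ℝ) < 1 - s by linarith [hs.2])]

lemma dichotomy (hc : Core f g)
    (hx : ∀ s ∈ Set.Ioo (0:ℝ) 1, s * f s + (1-s) * g s ≤ s * x₀ + (1-s) * x₁) :
    (∃ s ∈ Set.Ioo (0:ℝ) 1, f s ≤ x₀ ∧ g s ≤ x₁) ∨
      ((∀ s ∈ Set.Ioo (0:ℝ) 1, f s ≤ x₀) ∧ ∀ s ∈ Set.Ioo (0:ℝ) 1, x₁ < g s) ∨
      ((∀ s ∈ Set.Ioo (0:ℝ) 1, g s ≤ x₁) ∧ ∀ s ∈ Set.Ioo (0:ℝ) 1, x₀ < f s) := by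
  by_cases hA : ∃ s ∈ Set.Ioo (0:ℝ) 1, f s ≤ x₀ ∧ g s ≤ x₁
  · exact Or.inl hA
  push_neg at hA
  by_cases hP : ∃ s ∈ Set.Ioo (0:ℝ) 1, f s ≤ x₀
  · by_cases hQ : ∃ s ∈ Set.Ioo (0:ℝ) 1, g s ≤ x₁
    · exfalso
      obtain ⟨s₀, hs₀, hfs₀⟩ := hP
      obtain ⟨s₁, hs₁, hgs₁⟩ := hQ
      -- every Q-point is < every P-point
      have hlt : ∀ p ∈ Set.Ioo (0:ℝ) 1, f p ≤ x₀ → ∀ q ∈ Set.Ioo (0:ℝ) 1, g q ≤ x₁ → q < p := by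
        intro p hp hfp q hq hgq
        by_contra hle
        push_neg at hle
        exact absurd (le_trans (hc.gmono.monotoneOn hp hq hle) hgq)
          (not_le.mpr (hA p hp hfp))
      set S : Set ℝ := {s | s ∈ Set.Ioo (0:ℝ) 1 ∧ f s ≤ x₀} with hS
      have hSne : S.Nonempty := ⟨s₀, hs₀, hfs₀⟩
      have hSbd : BddBelow S := ⟨0, fun p hp => le_of_lt hp.1.1⟩
      set a := sInf S with haS
      have ha_le : ∀ p ∈ S, a ≤ p := fun p hp => csInf_le hSbd hp
      have ha_ge : s₁ ≤ a := le_csInf hSne fun p hp =>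
        le_of_lt (hlt p hp.1 hp.2 s₁ hs₁ hgs₁)
      have haI : a ∈ Set.Ioo (0:ℝ) 1 :=
        ⟨lt_of_lt_of_le hs₁.1 ha_ge, lt_of_le_of_lt (ha_le s₀ ⟨hs₀, hfs₀⟩) hs₀.2⟩
      have hPa : f a ≤ x₀ := by
        by_contra hfa
        push_neg at hfa
        have hcont : ContinuousAt f a := hc.contf.continuousAt (Ioo_mem_nhds haI.1 haI.2)
        have h_ev : ∀ᶠ x in 𝓝 a, x₀ < f x := hcont.eventually (eventually_gt_nhds hfa)
        obtain ⟨δ, hδ, hball⟩ := Metric.eventually_nhds_iff.mp h_ev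
        have hcontra : a + δ/2 ≤ a := by
          apply le_csInf hSne
          intro p hp
          by_contra hpa
          push_neg at hpa
          have h1 : a ≤ p := ha_le p hp
          have h2 : dist p a < δ := by
            rw [Real.dist_eq, abs_of_nonneg (by linarith)]
            linarith
          exact absurd hp.2 (not_le.mpr (hball h2))
        linarith
      have hQa : x₁ < g a := hA a haI hPa
      have hcontg : ContinuousAt g a := hc.contg.continuousAt (Ioo_mem_nhds haI.1 haI.2)
      have h_ev' : ∀ᶠ x in 𝓝 a, x₁ < g x := hcontg.eventually (eventually_gt_nhds hQa)
      obtain ⟨δ, hδ, hball⟩ := Metric.eventually_nhds_iff.mp h_ev'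
      set s := max (a/2) (a - δ/2) with hs
      have hslt : s < a := max_lt (by linarith [haI.1]) (by linarith)
      have hsI : s ∈ Set.Ioo (0:ℝ) 1 := by
        constructor
        · calc (0:ℝ) < a/2 := by linarith [haI.1]
          _ ≤ s := le_max_left _ _
        · exact lt_trans hslt haI.2
      have hsdist : dist s a < δ := by
        rw [Real.dist_eq, abs_of_nonpos (by linarith)]
        have : a - δ/2 ≤ s := le_max_right _ _
        linarith
      have hgs : x₁ < g s := hball hsdist
      have hfs : ¬ f s ≤ x₀ := by
        intro hfs'
        exact absurd (ha_le s ⟨hsI, hfs'⟩) (not_le.mpr hslt)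
      rcases hc.support_or hx s hsI with h | h
      · exact hfs h
      · linarith
    · push_neg at hQ
      refine Or.inr (Or.inl ⟨fun s hs => ?_, hQ⟩)
      rcases hc.support_or hx s hs with h | h
      · exact h
      · exact absurd h (not_le.mpr (hQ s hs))
  · push_neg at hP
    refine Or.inr (Or.inr ⟨fun s hs => ?_, hP⟩)
    rcases hc.support_or hx s hs with h | h
    · exact absurd h (not_le.mpr (hP s hs))
    · exact h

end Support


section Support2

variable {x₀ x₁ : ℝ}

lemma x1_ge (hc : Core f g)
    (hx : ∀ s ∈ Set.Ioo (0:ℝ) 1, s * f s + (1-s) * g s ≤ s * x₀ + (1-s) * x₁)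
    (hx0 : 0 ≤ x₀) : sInf (g '' Set.Ioo 0 1) ≤ x₁ := by
  have hbdd : BddBelow (g '' Set.Ioo 0 1) := ⟨0, by rintro y ⟨t, ht, rfl⟩; exact hc.g0 t ht⟩
  have key : ∀ ε > (0:ℝ), sInf (g '' Set.Ioo 0 1) ≤ x₁ + ε := by
    intro ε hε
    set s := min (1/2) (ε/(2*(x₀+1))) with hsdef
    have hspos : 0 < s := lt_min (by norm_num) (by positivity)
    have hsI : s ∈ Set.Ioo (0:ℝ) 1 :=
      ⟨hspos, lt_of_le_of_lt (min_le_left _ _) (by norm_num)⟩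
    have h1 := hx s hsI
    have h2 : 0 ≤ f s := hc.f0 s hsI
    have h3 : (1:ℝ)/2 ≤ 1 - s := by
      have := min_le_left (1/2 : ℝ) (ε/(2*(x₀+1))); linarith
    have h4 : s * (2*(x₀+1)) ≤ ε := by
      have h4' : s ≤ ε/(2*(x₀+1)) := min_le_right _ _
      exact (le_div_iff₀ (by positivity)).mp h4'
    have h5 : g s ≤ x₁ + ε := by
      nlinarith [mul_nonneg (le_of_lt hspos) h2, hx0, hε, hspos]
    exact le_trans (csInf_le hbdd (mem_image_of_mem g hsI)) h5
  by_contra hcon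
  push_neg at hcon
  linarith [key ((sInf (g '' Set.Ioo 0 1) - x₁)/2) (by linarith)]

lemma x0_ge (hc : Core f g)
    (hx : ∀ s ∈ Set.Ioo (0:ℝ) 1, s * f s + (1-s) * g s ≤ s * x₀ + (1-s) * x₁)
    (hx1 : 0 ≤ x₁) : sInf (f '' Set.Ioo 0 1) ≤ x₀ := by
  have hbdd : BddBelow (f '' Set.Ioo 0 1) := ⟨0, by rintro y ⟨t, ht, rfl⟩; exact hc.f0 t ht⟩
  have key : ∀ ε > (0:ℝ), sInf (f '' Set.Ioo 0 1) ≤ x₀ + ε := by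
    intro ε hε
    set s := max (1/2) (1 - ε/(2*(x₁+1))) with hsdef
    have hs1 : s < 1 := max_lt (by norm_num)
      (by nlinarith [show (0:ℝ) < ε/(2*(x₁+1)) by positivity])
    have hsI : s ∈ Set.Ioo (0:ℝ) 1 :=
      ⟨lt_of_lt_of_le (by norm_num) (le_max_left _ _), hs1⟩
    have h1 := hx s hsI
    have h2 : 0 ≤ g s := hc.g0 s hsI
    have h3 : (1:ℝ)/2 ≤ s := le_max_left _ _
    have h4 : (1 - s) * (2*(x₁+1)) ≤ ε := by
      have h4' : 1 - ε/(2*(x₁+1)) ≤ s := le_max_right _ _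
      have h4'' : 1 - s ≤ ε/(2*(x₁+1)) := by linarith
      exact (le_div_iff₀ (by positivity)).mp h4''
    have h5 : f s ≤ x₀ + ε := by
      nlinarith [mul_nonneg (show (0:ℝ) ≤ 1 - s by linarith [hsI.2]) h2, hx1, hε]
    exact le_trans (csInf_le hbdd (mem_image_of_mem f hsI)) h5
  by_contra hcon
  push_neg at hcon
  linarith [key ((sInf (f '' Set.Ioo 0 1) - x₀)/2) (by linarith)]

lemma coord_bounds (hc : Core f g)
    (hx : ∀ s ∈ Set.Ioo (0:ℝ) 1, s * f s + (1-s) * g s ≤ s * x₀ + (1-s) * x₁)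
    (hx0 : 0 ≤ x₀) (hx1 : 0 ≤ x₁) :
    sInf (f '' Set.Ioo 0 1) ≤ x₀ ∧ sInf (g '' Set.Ioo 0 1) ≤ x₁ := by
  have hbddf : BddBelow (f '' Set.Ioo 0 1) := ⟨0, by rintro y ⟨t, ht, rfl⟩; exact hc.f0 t ht⟩
  have hbddg : BddBelow (g '' Set.Ioo 0 1) := ⟨0, by rintro y ⟨t, ht, rfl⟩; exact hc.g0 t ht⟩
  rcases hc.dichotomy hx with ⟨s, hs, h1, h2⟩ | ⟨h1, _⟩ | ⟨h1, _⟩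
  · exact ⟨le_trans (csInf_le hbddf (mem_image_of_mem f hs)) h1,
      le_trans (csInf_le hbddg (mem_image_of_mem g hs)) h2⟩
  · have hhalf : (1/2 : ℝ) ∈ Set.Ioo (0:ℝ) 1 := by norm_num
    exact ⟨le_trans (csInf_le hbddf (mem_image_of_mem f hhalf)) (h1 _ hhalf),
      hc.x1_ge hx hx0⟩
  · have hhalf : (1/2 : ℝ) ∈ Set.Ioo (0:ℝ) 1 := by norm_num
    exact ⟨hc.x0_ge hx hx1,
      le_trans (csInf_le hbddg (mem_image_of_mem g hhalf)) (h1 _ hhalf)⟩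

end Support2

lemma sSup_Ec_f (hc : Core f g) (hη : 0 < η) :
    Real.exp (-η * sInf (f '' Set.Ioo 0 1)) ≤ sSup (Ec η f '' Set.Ioo 0 1) := by
  have hbddA : BddAbove (Ec η f '' Set.Ioo 0 1) := by
    refine ⟨1, ?_⟩
    rintro y ⟨t, ht, rfl⟩
    exact Ec_le_one hη (hc.f0 t ht)
  have hhalf : (1/2 : ℝ) ∈ Set.Ioo (0:ℝ) 1 := by norm_num
  set S := sSup (Ec η f '' Set.Ioo 0 1) with hSdef
  have hS : ∀ t ∈ Set.Ioo (0:ℝ) 1, Ec η f t ≤ S := fun t ht =>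
    le_csSup hbddA (mem_image_of_mem _ ht)
  have hSpos : 0 < S := lt_of_lt_of_le (Ec_pos (1/2)) (hS _ hhalf)
  have hft : ∀ t ∈ Set.Ioo (0:ℝ) 1, -Real.log S / η ≤ f t := by
    intro t ht
    have h1 : Real.exp (-η * f t) ≤ Real.exp (Real.log S) := by
      rw [Real.exp_log hSpos]; exact hS t ht
    have h2 := Real.exp_le_exp.mp h1
    rw [div_le_iff₀ hη]
    nlinarith
  have hB : -Real.log S / η ≤ sInf (f '' Set.Ioo 0 1) := by
    apply le_csInf ⟨f (1/2), mem_image_of_mem f hhalf⟩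
    rintro y ⟨t, ht, rfl⟩
    exact hft t ht
  calc Real.exp (-η * sInf (f '' Set.Ioo 0 1)) ≤ Real.exp (Real.log S) := by
        apply Real.exp_le_exp.mpr
        rw [div_le_iff₀ hη] at hB
        nlinarith
  _ = S := Real.exp_log hSpos

lemma sSup_Ec_g (hc : Core f g) (hη : 0 < η) :
    Real.exp (-η * sInf (g '' Set.Ioo 0 1)) ≤ sSup (Ec η g '' Set.Ioo 0 1) := by
  have hbddA : BddAbove (Ec η g '' Set.Ioo 0 1) := by
    refine ⟨1, ?_⟩
    rintro y ⟨t, ht, rfl⟩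
    exact Ec_le_one hη (hc.g0 t ht)
  have hhalf : (1/2 : ℝ) ∈ Set.Ioo (0:ℝ) 1 := by norm_num
  set S := sSup (Ec η g '' Set.Ioo 0 1) with hSdef
  have hS : ∀ t ∈ Set.Ioo (0:ℝ) 1, Ec η g t ≤ S := fun t ht =>
    le_csSup hbddA (mem_image_of_mem _ ht)
  have hSpos : 0 < S := lt_of_lt_of_le (Ec_pos (1/2)) (hS _ hhalf)
  have hft : ∀ t ∈ Set.Ioo (0:ℝ) 1, -Real.log S / η ≤ g t := by
    intro t ht
    have h1 : Real.exp (-η * g t) ≤ Real.exp (Real.log S) := by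
      rw [Real.exp_log hSpos]; exact hS t ht
    have h2 := Real.exp_le_exp.mp h1
    rw [div_le_iff₀ hη]
    nlinarith
  have hB : -Real.log S / η ≤ sInf (g '' Set.Ioo 0 1) := by
    apply le_csInf ⟨g (1/2), mem_image_of_mem g hhalf⟩
    rintro y ⟨t, ht, rfl⟩
    exact hft t ht
  calc Real.exp (-η * sInf (g '' Set.Ioo 0 1)) ≤ Real.exp (Real.log S) := by
        apply Real.exp_le_exp.mpr
        rw [div_le_iff₀ hη] at hB
        nlinarith
  _ = S := Real.exp_log hSpos

/-- Master lemma: the tangent line at `r` dominates every superprediction point. -/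
lemma master (hc : Core f g) (hη : 0 < η)
    (hmix : ∀ t ∈ Set.Ioo (0:ℝ) 1, η * ((1-t) * deriv g t) ≤ 1)
    {x₀ x₁ : ℝ}
    (hx : ∀ s ∈ Set.Ioo (0:ℝ) 1, s * f s + (1-s) * g s ≤ s * x₀ + (1-s) * x₁)
    (hx0 : 0 ≤ x₀) (hx1 : 0 ≤ x₁) {r : ℝ} (hr : r ∈ Set.Ioo (0:ℝ) 1) :
    Real.exp (-η * x₁) ≤ Ec η g r + mm η f g r * (Real.exp (-η * x₀) - Ec η f r) := by
  have hmmneg : mm η f g r < 0 := hc.mm_neg hr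
  rcases hc.dichotomy hx with ⟨s, hs, h1, h2⟩ | ⟨h1, h2⟩ | ⟨h1, h2⟩
  · -- dominated by a curve point
    have e1 : Real.exp (-η * x₁) ≤ Ec η g s :=
      Real.exp_le_exp.mpr (by nlinarith [hη, h2])
    have e2 : Real.exp (-η * x₀) ≤ Ec η f s :=
      Real.exp_le_exp.mpr (by nlinarith [hη, h1])
    have e3 := hc.tangent_curve hη hmix hr hs
    nlinarith [mul_le_mul_of_nonpos_left e2 (le_of_lt hmmneg)]
  · -- left-end case : f ≤ x₀ everywhere, x₁ < g everywhere
    have hx1B : sInf (g '' Set.Ioo 0 1) ≤ x₁ := hc.x1_ge hx hx0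
    set T := Ec η g r + mm η f g r * (Real.exp (-η * x₀) - Ec η f r) with hT
    have hub : ∀ s ∈ Set.Ioo (0:ℝ) 1, Ec η g s ≤ T := by
      intro s hs
      have e2 : Real.exp (-η * x₀) ≤ Ec η f s :=
        Real.exp_le_exp.mpr (by nlinarith [hη, h1 s hs])
      have e3 := hc.tangent_curve hη hmix hr hs
      nlinarith [mul_le_mul_of_nonpos_left e2 (le_of_lt hmmneg)]
    have hSle : sSup (Ec η g '' Set.Ioo 0 1) ≤ T := by
      apply csSup_le ⟨Ec η g (1/2), mem_image_of_mem _ (by norm_num)⟩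
      rintro y ⟨t, ht, rfl⟩
      exact hub t ht
    calc Real.exp (-η * x₁) ≤ Real.exp (-η * sInf (g '' Set.Ioo 0 1)) :=
          Real.exp_le_exp.mpr (by nlinarith)
    _ ≤ sSup (Ec η g '' Set.Ioo 0 1) := hc.sSup_Ec_g hη
    _ ≤ T := hSle
  · -- right-end case : g ≤ x₁ everywhere, x₀ < f everywhere
    have hx0B : sInf (f '' Set.Ioo 0 1) ≤ x₀ := hc.x0_ge hx hx1
    set T := Ec η g r + mm η f g r * (Real.exp (-η * x₀) - Ec η f r) with hT
    by_contra hcon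
    push_neg at hcon
    set δ := Real.exp (-η * x₁) - T with hδ
    have hδpos : 0 < δ := by simp only [hδ]; linarith
    have hub : ∀ s ∈ Set.Ioo (0:ℝ) 1, Ec η f s ≤ Real.exp (-η * x₀) + δ / mm η f g r := by
      intro s hs
      have e1 : Real.exp (-η * x₁) ≤ Ec η g s :=
        Real.exp_le_exp.mpr (by nlinarith [hη, h1 s hs])
      have e3 := hc.tangent_curve hη hmix hr hs
      -- δ ≤ mm * (Ec f s - exp(-η x₀))
      have e4 : δ ≤ mm η f g r * (Ec η f s - Real.exp (-η * x₀)) := by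
        simp only [hδ, hT] at *
        nlinarith
      rw [mul_comm] at e4
      have e5 : Ec η f s - Real.exp (-η * x₀) ≤ δ / mm η f g r :=
        (le_div_iff_of_neg hmmneg).mpr e4
      linarith
    have hSle : sSup (Ec η f '' Set.Ioo 0 1) ≤ Real.exp (-η * x₀) + δ / mm η f g r := by
      apply csSup_le ⟨Ec η f (1/2), mem_image_of_mem _ (by norm_num)⟩
      rintro y ⟨t, ht, rfl⟩
      exact hub t ht
    have hneg : δ / mm η f g r < 0 := div_neg_of_pos_of_neg hδpos hmmneg
    have hchain : Real.exp (-η * x₀) ≤ sSup (Ec η f '' Set.Ioo 0 1) := by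
      calc Real.exp (-η * x₀) ≤ Real.exp (-η * sInf (f '' Set.Ioo 0 1)) :=
            Real.exp_le_exp.mpr (by nlinarith)
      _ ≤ _ := hc.sSup_Ec_f hη
    linarith



lemma comb_le_right {a b ea eb : ℝ} (ha : 0 ≤ a) (hab : a + b = 1) (hle : ea ≤ eb) :
    a * ea + b * eb ≤ eb := by
  have h1 := mul_le_mul_of_nonneg_left hle ha
  have hb' : b = 1 - a := by linarith
  rw [hb']
  nlinarith [h1]

lemma comb_le_left {a b ea eb : ℝ} (hb : 0 ≤ b) (hab : a + b = 1) (hle : eb ≤ ea) :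
    a * ea + b * eb ≤ ea := by
  have h1 := mul_le_mul_of_nonneg_left hle hb
  have ha' : a = 1 - b := by linarith
  rw [ha']
  nlinarith [h1]

/-- Given two superprediction points and a convex combination, some prediction
dominates the combination of the exponentiated points. -/
lemma q3 (hc : Core f g) (hη : 0 < η)
    (hmix : ∀ t ∈ Set.Ioo (0:ℝ) 1, η * ((1-t) * deriv g t) ≤ 1)
    {x₀ x₁ y₀ y₁ a b : ℝ}
    (hxs : ∀ s ∈ Set.Ioo (0:ℝ) 1, s * f s + (1-s) * g s ≤ s * x₀ + (1-s) * x₁)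
    (hx0 : 0 ≤ x₀) (hx1 : 0 ≤ x₁)
    (hys : ∀ s ∈ Set.Ioo (0:ℝ) 1, s * f s + (1-s) * g s ≤ s * y₀ + (1-s) * y₁)
    (hy0 : 0 ≤ y₀) (hy1 : 0 ≤ y₁)
    (ha : 0 < a) (hb : 0 < b) (hab : a + b = 1) :
    ∃ z₀ z₁ : ℝ,
      ((∃ r ∈ Set.Ioo (0:ℝ) 1, z₀ = f r ∧ z₁ = g r) ∨ (z₀ = x₀ ∧ z₁ = x₁) ∨
        (z₀ = y₀ ∧ z₁ = y₁)) ∧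
      a * Real.exp (-η * x₀) + b * Real.exp (-η * y₀) ≤ Real.exp (-η * z₀) ∧
      a * Real.exp (-η * x₁) + b * Real.exp (-η * y₁) ≤ Real.exp (-η * z₁) := by
  set w0 := a * Real.exp (-η * x₀) + b * Real.exp (-η * y₀) with hw0
  set w1 := a * Real.exp (-η * x₁) + b * Real.exp (-η * y₁) with hw1
  have hhalf : (1/2 : ℝ) ∈ Set.Ioo (0:ℝ) 1 := by norm_num
  by_cases hU2 : ∃ r ∈ Set.Ioo (0:ℝ) 1, w0 ≤ Ec η f r
  · by_cases hU1 : ∃ r ∈ Set.Ioo (0:ℝ) 1, Ec η f r ≤ w0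
    · -- intermediate value: exact curve point
      obtain ⟨r₂, hr₂, h₂⟩ := hU2
      obtain ⟨r₁, hr₁, h₁⟩ := hU1
      have hrex : ∃ r ∈ Set.Ioo (0:ℝ) 1, Ec η f r = w0 := by
        rcases le_total r₁ r₂ with hle | hle
        · have hsub : Set.Icc r₁ r₂ ⊆ Set.Ioo (0:ℝ) 1 := fun x hx =>
            ⟨lt_of_lt_of_le hr₁.1 hx.1, lt_of_le_of_lt hx.2 hr₂.2⟩
          have him := intermediate_value_Icc hle ((hc.contEcf (η := η)).mono hsub)
          obtain ⟨r, hrI, hr⟩ := him ⟨h₁, h₂⟩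
          exact ⟨r, hsub hrI, hr⟩
        · have hsub : Set.Icc r₂ r₁ ⊆ Set.Ioo (0:ℝ) 1 := fun x hx =>
            ⟨lt_of_lt_of_le hr₂.1 hx.1, lt_of_le_of_lt hx.2 hr₁.2⟩
          have him := intermediate_value_Icc' hle ((hc.contEcf (η := η)).mono hsub)
          obtain ⟨r, hrI, hr⟩ := him ⟨h₁, h₂⟩
          exact ⟨r, hsub hrI, hr⟩
      obtain ⟨r, hr, hrEq⟩ := hrex
      refine ⟨f r, g r, Or.inl ⟨r, hr, rfl, rfl⟩, ?_, ?_⟩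
      · exact le_of_eq hrEq.symm
      · have hmx := hc.master hη hmix hxs hx0 hx1 hr
        have hmy := hc.master hη hmix hys hy0 hy1 hr
        have h' := add_le_add (mul_le_mul_of_nonneg_left hmx ha.le)
          (mul_le_mul_of_nonneg_left hmy hb.le)
        have h1 : Ec η f r = a * Real.exp (-η * x₀) + b * Real.exp (-η * y₀) := hrEq
        have key : a * (Ec η g r + mm η f g r * (Real.exp (-η * x₀) - Ec η f r))
            + b * (Ec η g r + mm η f g r * (Real.exp (-η * y₀) - Ec η f r)) = Ec η g r := by
          linear_combination (Ec η g r - mm η f g r * Ec η f r) * hab - mm η f g r * h1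
        show w1 ≤ Ec η g r
        calc w1 ≤ _ := h'
        _ = Ec η g r := key
    · push_neg at hU1
      by_cases hV : ∃ sV ∈ Set.Ioo (0:ℝ) 1, w1 ≤ Ec η g sV
      · obtain ⟨sV, hsV, hVle⟩ := hV
        exact ⟨f sV, g sV, Or.inl ⟨sV, hsV, rfl, rfl⟩,
          le_of_lt (hU1 sV hsV), hVle⟩
      · push_neg at hV
        -- w1 is at least the supremum value exp(-η inf g)
        have hSle : sSup (Ec η g '' Set.Ioo 0 1) ≤ w1 := by
          apply csSup_le ⟨Ec η g (1/2), mem_image_of_mem _ hhalf⟩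
          rintro yv ⟨t, ht, rfl⟩
          exact le_of_lt (hV t ht)
        have hEw : Real.exp (-η * sInf (g '' Set.Ioo 0 1)) ≤ w1 :=
          le_trans (hc.sSup_Ec_g hη) hSle
        have hxB := (hc.coord_bounds hxs hx0 hx1).2
        have hyB := (hc.coord_bounds hys hy0 hy1).2
        have hxE : Real.exp (-η * x₁) ≤ Real.exp (-η * sInf (g '' Set.Ioo 0 1)) :=
          Real.exp_le_exp.mpr (by nlinarith [mul_le_mul_of_nonneg_left hxB (le_of_lt hη)])
        have hyE : Real.exp (-η * y₁) ≤ Real.exp (-η * sInf (g '' Set.Ioo 0 1)) :=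
          Real.exp_le_exp.mpr (by nlinarith [mul_le_mul_of_nonneg_left hyB (le_of_lt hη)])
        have hE1 : a * Real.exp (-η * sInf (g '' Set.Ioo 0 1)) +
            b * Real.exp (-η * sInf (g '' Set.Ioo 0 1)) =
            Real.exp (-η * sInf (g '' Set.Ioo 0 1)) := by
          linear_combination Real.exp (-η * sInf (g '' Set.Ioo 0 1)) * hab
        have hxEq : Real.exp (-η * x₁) = Real.exp (-η * sInf (g '' Set.Ioo 0 1)) := by
          by_contra hne
          have hlt : Real.exp (-η * x₁) < Real.exp (-η * sInf (g '' Set.Ioo 0 1)) :=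
            lt_of_le_of_ne hxE hne
          linarith [mul_lt_mul_of_pos_left hlt ha,
            mul_le_mul_of_nonneg_left hyE hb.le, hE1, hEw]
        have hyEq : Real.exp (-η * y₁) = Real.exp (-η * sInf (g '' Set.Ioo 0 1)) := by
          by_contra hne
          have hlt : Real.exp (-η * y₁) < Real.exp (-η * sInf (g '' Set.Ioo 0 1)) :=
            lt_of_le_of_ne hyE hne
          linarith [mul_lt_mul_of_pos_left hlt hb,
            mul_le_mul_of_nonneg_left hxE ha.le, hE1, hEw]
        rcases le_total (Real.exp (-η * x₀)) (Real.exp (-η * y₀)) with hle | hle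
        · exact ⟨y₀, y₁, Or.inr (Or.inr ⟨rfl, rfl⟩), comb_le_right ha.le hab hle,
            comb_le_right ha.le hab (le_of_eq (hxEq.trans hyEq.symm))⟩
        · exact ⟨x₀, x₁, Or.inr (Or.inl ⟨rfl, rfl⟩), comb_le_left hb.le hab hle,
            comb_le_left hb.le hab (le_of_eq (hyEq.trans hxEq.symm))⟩
  · push_neg at hU2
    have hSle : sSup (Ec η f '' Set.Ioo 0 1) ≤ w0 := by
      apply csSup_le ⟨Ec η f (1/2), mem_image_of_mem _ hhalf⟩
      rintro yv ⟨t, ht, rfl⟩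
      exact le_of_lt (hU2 t ht)
    have hEw : Real.exp (-η * sInf (f '' Set.Ioo 0 1)) ≤ w0 :=
      le_trans (hc.sSup_Ec_f hη) hSle
    have hxB := (hc.coord_bounds hxs hx0 hx1).1
    have hyB := (hc.coord_bounds hys hy0 hy1).1
    have hxE : Real.exp (-η * x₀) ≤ Real.exp (-η * sInf (f '' Set.Ioo 0 1)) :=
      Real.exp_le_exp.mpr (by nlinarith [mul_le_mul_of_nonneg_left hxB (le_of_lt hη)])
    have hyE : Real.exp (-η * y₀) ≤ Real.exp (-η * sInf (f '' Set.Ioo 0 1)) :=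
      Real.exp_le_exp.mpr (by nlinarith [mul_le_mul_of_nonneg_left hyB (le_of_lt hη)])
    have hE1 : a * Real.exp (-η * sInf (f '' Set.Ioo 0 1)) +
        b * Real.exp (-η * sInf (f '' Set.Ioo 0 1)) =
        Real.exp (-η * sInf (f '' Set.Ioo 0 1)) := by
      linear_combination Real.exp (-η * sInf (f '' Set.Ioo 0 1)) * hab
    have hxEq : Real.exp (-η * x₀) = Real.exp (-η * sInf (f '' Set.Ioo 0 1)) := by
      by_contra hne
      have hlt : Real.exp (-η * x₀) < Real.exp (-η * sInf (f '' Set.Ioo 0 1)) :=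
        lt_of_le_of_ne hxE hne
      linarith [mul_lt_mul_of_pos_left hlt ha,
        mul_le_mul_of_nonneg_left hyE hb.le, hE1, hEw]
    have hyEq : Real.exp (-η * y₀) = Real.exp (-η * sInf (f '' Set.Ioo 0 1)) := by
      by_contra hne
      have hlt : Real.exp (-η * y₀) < Real.exp (-η * sInf (f '' Set.Ioo 0 1)) :=
        lt_of_le_of_ne hyE hne
      linarith [mul_lt_mul_of_pos_left hlt hb,
        mul_le_mul_of_nonneg_left hxE ha.le, hE1, hEw]
    rcases le_total (Real.exp (-η * x₁)) (Real.exp (-η * y₁)) with hle | hle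
    · exact ⟨y₀, y₁, Or.inr (Or.inr ⟨rfl, rfl⟩),
        comb_le_right ha.le hab (le_of_eq (hxEq.trans hyEq.symm)), comb_le_right ha.le hab hle⟩
    · exact ⟨x₀, x₁, Or.inr (Or.inl ⟨rfl, rfl⟩),
        comb_le_left hb.le hab (le_of_eq (hyEq.trans hxEq.symm)), comb_le_left hb.le hab hle⟩


set_option maxHeartbeats 1000000 in
/-- If `η (1-t₀) g'(t₀) > 1`, midpoints of nearby curve points violate the
support inequality at `t₀`. -/
lemma necessity (hc : Core f g) (hη : 0 < η) {t₀ : ℝ} (ht₀ : t₀ ∈ Set.Ioo (0:ℝ) 1)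
    (hgt : 1 < η * ((1-t₀) * deriv g t₀)) :
    ∃ s₁ ∈ Set.Ioo (0:ℝ) 1, ∃ s₂ ∈ Set.Ioo (0:ℝ) 1,
      t₀ * (-Real.log ((Ec η f s₁ + Ec η f s₂)/2) / η) +
        (1-t₀) * (-Real.log ((Ec η g s₁ + Ec η g s₂)/2) / η)
      < t₀ * f t₀ + (1-t₀) * g t₀ := by
  obtain ⟨ht₀0, ht₀1⟩ := ht₀
  set δ₀ : ℝ := min t₀ (1 - t₀) with hδ₀def
  have hδ₀pos : 0 < δ₀ := lt_min ht₀0 (by linarith)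
  have hmem : ∀ s ∈ Set.Ioo (-δ₀) δ₀,
      t₀ + s ∈ Set.Ioo (0:ℝ) 1 ∧ t₀ - s ∈ Set.Ioo (0:ℝ) 1 := by
    intro s hs
    have h1 : δ₀ ≤ t₀ := min_le_left _ _
    have h2 : δ₀ ≤ 1 - t₀ := min_le_right _ _
    obtain ⟨hs1, hs2⟩ := hs
    exact ⟨⟨by linarith, by linarith⟩, ⟨by linarith, by linarith⟩⟩
  set P : ℝ → ℝ := fun s => (Ec η f (t₀ + s) + Ec η f (t₀ - s))/2 with hPdef
  set Q : ℝ → ℝ := fun s => (Ec η g (t₀ + s) + Ec η g (t₀ - s))/2 with hQdef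
  set P' : ℝ → ℝ := fun s =>
    (-η * deriv f (t₀+s) * Ec η f (t₀+s) + η * deriv f (t₀-s) * Ec η f (t₀-s))/2 with hP'def
  set Q' : ℝ → ℝ := fun s =>
    (-η * deriv g (t₀+s) * Ec η g (t₀+s) + η * deriv g (t₀-s) * Ec η g (t₀-s))/2 with hQ'def
  have hplus : ∀ s : ℝ, HasDerivAt (fun x : ℝ => t₀ + x) 1 s := fun s =>
    (hasDerivAt_id s).const_add t₀
  have hminus : ∀ s : ℝ, HasDerivAt (fun x : ℝ => t₀ - x) (-1) s := fun s => by
    simpa using (hasDerivAt_id' s).const_sub t₀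
  have hPpos : ∀ s, 0 < P s := fun s =>
    div_pos (add_pos (Ec_pos _) (Ec_pos _)) two_pos
  have hQpos : ∀ s, 0 < Q s := fun s =>
    div_pos (add_pos (Ec_pos _) (Ec_pos _)) two_pos
  have hP : ∀ s ∈ Set.Ioo (-δ₀) δ₀, HasDerivAt P (P' s) s := by
    intro s hs
    obtain ⟨hsp, hsm⟩ := hmem s hs
    have h1 : HasDerivAt (fun x => Ec η f (t₀ + x))
        (-η * deriv f (t₀+s) * Ec η f (t₀+s) * 1) s :=
      (hc.hasDerivAt_Ec hη hsp).comp s (hplus s)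
    have h2 : HasDerivAt (fun x => Ec η f (t₀ - x))
        (-η * deriv f (t₀-s) * Ec η f (t₀-s) * (-1)) s :=
      (hc.hasDerivAt_Ec hη hsm).comp s (hminus s)
    have := (h1.add h2).div_const 2
    refine this.congr_deriv ?_
    simp only [hP'def]
    ring
  have hQ : ∀ s ∈ Set.Ioo (-δ₀) δ₀, HasDerivAt Q (Q' s) s := by
    intro s hs
    obtain ⟨hsp, hsm⟩ := hmem s hs
    have h1 : HasDerivAt (fun x => Ec η g (t₀ + x))
        (-η * deriv g (t₀+s) * Ec η g (t₀+s) * 1) s :=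
      (hc.hasDerivAt_Ec' hη hsp).comp s (hplus s)
    have h2 : HasDerivAt (fun x => Ec η g (t₀ - x))
        (-η * deriv g (t₀-s) * Ec η g (t₀-s) * (-1)) s :=
      (hc.hasDerivAt_Ec' hη hsm).comp s (hminus s)
    have := (h1.add h2).div_const 2
    refine this.congr_deriv ?_
    simp only [hQ'def]
    ring
  set F : ℝ → ℝ := fun s => t₀ * Real.log (P s) + (1-t₀) * Real.log (Q s) with hFdef
  set G : ℝ → ℝ := fun s => t₀ * (P' s / P s) + (1-t₀) * (Q' s / Q s) with hGdef
  have hF : ∀ s ∈ Set.Ioo (-δ₀) δ₀, HasDerivAt F (G s) s := by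
    intro s hs
    exact (((hP s hs).log (ne_of_gt (hPpos s))).const_mul t₀).add
      (((hQ s hs).log (ne_of_gt (hQpos s))).const_mul (1-t₀))
  have hG0 : G 0 = 0 := by
    simp only [hGdef, hP'def, hQ'def, add_zero, sub_zero]
    ring
  -- second derivative data at 0
  have h0mem : (0:ℝ) ∈ Set.Ioo (-δ₀) δ₀ := ⟨by linarith, hδ₀pos⟩
  have ht₀I : t₀ ∈ Set.Ioo (0:ℝ) 1 := ⟨ht₀0, ht₀1⟩
  have hcompf1 : HasDerivAt (fun s => deriv f (t₀ + s)) (deriv (deriv f) t₀ * 1) 0 := by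
    have hb : HasDerivAt (deriv f) (deriv (deriv f) (t₀ + 0)) (t₀ + 0) :=
      hc.d2f (t₀ + 0) (by rw [add_zero]; exact ht₀I)
    have h := hb.comp (0:ℝ) (hplus 0)
    rw [add_zero] at h
    exact h
  have hcompf2 : HasDerivAt (fun s => Ec η f (t₀ + s)) ((-η * deriv f t₀ * Ec η f t₀) * 1) 0 := by
    have hb : HasDerivAt (Ec η f) (-η * deriv f (t₀ + 0) * Ec η f (t₀ + 0)) (t₀ + 0) :=
      hc.hasDerivAt_Ec hη (by rw [add_zero]; exact ht₀I)
    have h := hb.comp (0:ℝ) (hplus 0)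
    rw [add_zero] at h
    exact h
  have hcompf3 : HasDerivAt (fun s => deriv f (t₀ - s)) (deriv (deriv f) t₀ * (-1)) 0 := by
    have hb : HasDerivAt (deriv f) (deriv (deriv f) (t₀ - 0)) (t₀ - 0) :=
      hc.d2f (t₀ - 0) (by rw [sub_zero]; exact ht₀I)
    have h := hb.comp (0:ℝ) (hminus 0)
    rw [sub_zero] at h
    exact h
  have hcompf4 : HasDerivAt (fun s => Ec η f (t₀ - s))
      ((-η * deriv f t₀ * Ec η f t₀) * (-1)) 0 := by
    have hb : HasDerivAt (Ec η f) (-η * deriv f (t₀ - 0) * Ec η f (t₀ - 0)) (t₀ - 0) :=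
      hc.hasDerivAt_Ec hη (by rw [sub_zero]; exact ht₀I)
    have h := hb.comp (0:ℝ) (hminus 0)
    rw [sub_zero] at h
    exact h
  have hcompg1 : HasDerivAt (fun s => deriv g (t₀ + s)) (deriv (deriv g) t₀ * 1) 0 := by
    have hb : HasDerivAt (deriv g) (deriv (deriv g) (t₀ + 0)) (t₀ + 0) :=
      hc.d2g (t₀ + 0) (by rw [add_zero]; exact ht₀I)
    have h := hb.comp (0:ℝ) (hplus 0)
    rw [add_zero] at h
    exact h
  have hcompg2 : HasDerivAt (fun s => Ec η g (t₀ + s)) ((-η * deriv g t₀ * Ec η g t₀) * 1) 0 := by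
    have hb : HasDerivAt (Ec η g) (-η * deriv g (t₀ + 0) * Ec η g (t₀ + 0)) (t₀ + 0) :=
      hc.hasDerivAt_Ec' hη (by rw [add_zero]; exact ht₀I)
    have h := hb.comp (0:ℝ) (hplus 0)
    rw [add_zero] at h
    exact h
  have hcompg3 : HasDerivAt (fun s => deriv g (t₀ - s)) (deriv (deriv g) t₀ * (-1)) 0 := by
    have hb : HasDerivAt (deriv g) (deriv (deriv g) (t₀ - 0)) (t₀ - 0) :=
      hc.d2g (t₀ - 0) (by rw [sub_zero]; exact ht₀I)
    have h := hb.comp (0:ℝ) (hminus 0)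
    rw [sub_zero] at h
    exact h
  have hcompg4 : HasDerivAt (fun s => Ec η g (t₀ - s))
      ((-η * deriv g t₀ * Ec η g t₀) * (-1)) 0 := by
    have hb : HasDerivAt (Ec η g) (-η * deriv g (t₀ - 0) * Ec η g (t₀ - 0)) (t₀ - 0) :=
      hc.hasDerivAt_Ec' hη (by rw [sub_zero]; exact ht₀I)
    have h := hb.comp (0:ℝ) (hminus 0)
    rw [sub_zero] at h
    exact h
  set Wf : ℝ := -η * (deriv (deriv f) t₀ * Ec η f t₀ +
      deriv f t₀ * (-η * deriv f t₀ * Ec η f t₀)) with hWfdef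
  set Wg : ℝ := -η * (deriv (deriv g) t₀ * Ec η g t₀ +
      deriv g t₀ * (-η * deriv g t₀ * Ec η g t₀)) with hWgdef
  have hP'd : HasDerivAt P' Wf 0 := by
    have h1 := hcompf1.mul hcompf2
    have h2 := hcompf3.mul hcompf4
    simp only [add_zero, sub_zero] at h1 h2
    have h3 := ((h1.const_mul (-η)).add (h2.const_mul η)).div_const 2
    refine (h3.congr_deriv ?_).congr_of_eventuallyEq (Filter.Eventually.of_forall fun x => ?_)
    · simp only [hWfdef]; ring
    · simp only [hP'def, Pi.mul_apply, Pi.add_apply]; ring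
  have hQ'd : HasDerivAt Q' Wg 0 := by
    have h1 := hcompg1.mul hcompg2
    have h2 := hcompg3.mul hcompg4
    simp only [add_zero, sub_zero] at h1 h2
    have h3 := ((h1.const_mul (-η)).add (h2.const_mul η)).div_const 2
    refine (h3.congr_deriv ?_).congr_of_eventuallyEq (Filter.Eventually.of_forall fun x => ?_)
    · simp only [hWgdef]; ring
    · simp only [hQ'def, Pi.mul_apply, Pi.add_apply]; ring
  have hP0 : P 0 = Ec η f t₀ := by simp only [hPdef, add_zero, sub_zero]; ring
  have hQ0 : Q 0 = Ec η g t₀ := by simp only [hQdef, add_zero, sub_zero]; ring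
  have hP'0 : P' 0 = 0 := by simp only [hP'def, add_zero, sub_zero]; ring
  have hQ'0 : Q' 0 = 0 := by simp only [hQ'def, add_zero, sub_zero]; ring
  set κ : ℝ := t₀ * ((Wf * P 0 - P' 0 * P' 0) / (P 0)^2) +
      (1-t₀) * ((Wg * Q 0 - Q' 0 * Q' 0) / (Q 0)^2) with hκdef
  have hGd : HasDerivAt G κ 0 := by
    have h1 : HasDerivAt (fun s => P' s / P s) ((Wf * P 0 - P' 0 * P' 0) / (P 0)^2) 0 :=
      hP'd.div (hP 0 h0mem) (ne_of_gt (hPpos 0))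
    have h2 : HasDerivAt (fun s => Q' s / Q s) ((Wg * Q 0 - Q' 0 * Q' 0) / (Q 0)^2) 0 :=
      hQ'd.div (hQ 0 h0mem) (ne_of_gt (hQpos 0))
    exact (h1.const_mul t₀).add (h2.const_mul (1-t₀))
  have hκpos : 0 < κ := by
    have hκeq : κ = t₀ * (η^2 * (deriv f t₀)^2 - η * deriv (deriv f) t₀) +
        (1-t₀) * (η^2 * (deriv g t₀)^2 - η * deriv (deriv g) t₀) := by
      rw [hκdef, hP0, hQ0, hP'0, hQ'0, hWfdef, hWgdef]
      have hu := Ec_pos (η := η) (f := f) t₀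
      have hv := Ec_pos (η := η) (f := g) t₀
      field_simp
      ring
    rw [hκeq]
    set a := deriv f t₀
    set b := deriv g t₀
    set A := deriv (deriv f) t₀
    set B := deriv (deriv g) t₀
    have hSt : t₀ * a + (1-t₀) * b = 0 := hc.stat t₀ ht₀I
    have hD2 : a + t₀ * A - b + (1-t₀) * B = 0 := hc.stat' t₀ ht₀I
    have hbpos : 0 < b := hc.dgpos t₀ ht₀I
    have hκt : t₀ * (t₀ * (η^2 * a^2 - η * A) + (1-t₀) * (η^2 * b^2 - η * B))
        = η * b * (η * (1-t₀) * b - 1) := by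
      linear_combination (η^2*(t₀*a - (1-t₀)*b) + η) * hSt - η*t₀ * hD2
    have hrhs : 0 < η * b * (η * (1-t₀) * b - 1) :=
      mul_pos (mul_pos hη hbpos) (by linarith)
    nlinarith [hκt, hrhs, ht₀0]
  -- G is positive on a right neighbourhood of 0
  have hslope := hasDerivAt_iff_tendsto_slope.mp hGd
  have hev2 : ∀ᶠ s in 𝓝[≠] (0:ℝ), 0 < slope G 0 s :=
    hslope.eventually (eventually_gt_nhds hκpos)
  have hev3 : ∀ᶠ s in 𝓝[>] (0:ℝ), 0 < slope G 0 s :=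
    hev2.filter_mono (nhdsWithin_mono _ (fun x hx => ne_of_gt hx))
  have hev4 : ∀ᶠ s in 𝓝[>] (0:ℝ), 0 < G s := by
    filter_upwards [hev3, self_mem_nhdsWithin] with s h1 h2
    rw [slope_def_field] at h1
    rw [hG0, sub_zero, sub_zero] at h1
    rcases div_pos_iff.mp h1 with ⟨h, _⟩ | ⟨_, h⟩
    · exact h
    · exact absurd h2 (by simp only [Set.mem_Ioi]; linarith)
  obtain ⟨δ1, hδ1, hsub⟩ := mem_nhdsGT_iff_exists_Ioo_subset.mp hev4
  rw [Set.mem_Ioi] at hδ1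
  set δ := min (δ1/2) (δ₀/2) with hδdef
  have hδpos : 0 < δ := lt_min (by linarith) (by linarith)
  have hδlt1 : δ < δ1 := lt_of_le_of_lt (min_le_left _ _) (by linarith)
  have hδlt0 : δ < δ₀ := lt_of_le_of_lt (min_le_right _ _) (by linarith)
  have hIccsub : Set.Icc (0:ℝ) δ ⊆ Set.Ioo (-δ₀) δ₀ := fun x hx =>
    ⟨by linarith [hx.1], by linarith [hx.2]⟩
  have hFmono : StrictMonoOn F (Set.Icc 0 δ) := by
    apply strictMonoOn_of_deriv_pos (convex_Icc 0 δ)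
    · exact fun x hx => (hF x (hIccsub hx)).continuousAt.continuousWithinAt
    · intro x hx
      rw [interior_Icc] at hx
      rw [(hF x (hIccsub (Set.mem_Icc_of_Ioo hx))).deriv]
      exact hsub ⟨hx.1, lt_trans hx.2 hδlt1⟩
  have hlt : F 0 < F δ :=
    hFmono (Set.left_mem_Icc.mpr (le_of_lt hδpos))
      (Set.right_mem_Icc.mpr (le_of_lt hδpos)) hδpos
  have hF0 : F 0 = -η * (t₀ * f t₀ + (1-t₀) * g t₀) := by
    have hl1 : Real.log (P 0) = -η * f t₀ := by rw [hP0]; exact Real.log_exp _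
    have hl2 : Real.log (Q 0) = -η * g t₀ := by rw [hQ0]; exact Real.log_exp _
    simp only [hFdef]
    rw [hl1, hl2]
    ring
  obtain ⟨hmp, hmm'⟩ := hmem δ ⟨by linarith, hδlt0⟩
  refine ⟨t₀ + δ, hmp, t₀ - δ, hmm', ?_⟩
  have hgoal : t₀ * (-Real.log ((Ec η f (t₀+δ) + Ec η f (t₀-δ))/2) / η) +
      (1-t₀) * (-Real.log ((Ec η g (t₀+δ) + Ec η g (t₀-δ))/2) / η) = -F δ / η := by
    simp only [hFdef, hPdef, hQdef]
    field_simp [hη.ne']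
    ring
  rw [hgoal]
  rw [div_lt_iff₀ hη]
  nlinarith [hlt, hF0]

end Core


section Bridge

variable {ℓ : (Fin 2 → ℝ) → Fin 2 → ℝ} {η : ℝ}

lemma mem_simplex2 {t : ℝ} (h0 : 0 ≤ t) (h1 : t ≤ 1) : ![t, 1-t] ∈ simplex2 := by
  constructor
  · intro i
    fin_cases i
    · simpa using h0
    · simpa using by linarith
  · simp [Fin.sum_univ_two]

lemma core_of (hrange : ∀ p ∈ simplex2, ∀ i, 0 ≤ ℓ p i)
    (hadm : IsAdmissible2 ℓ) (hprop : IsProper2 ℓ) : Core (tl ℓ 0) (tl ℓ 1) where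
  cf := hadm.1
  cg := hadm.2.1
  f0 := fun t ht => hrange _ (mem_simplex2 ht.1.le ht.2.le) 0
  g0 := fun t ht => hrange _ (mem_simplex2 ht.1.le ht.2.le) 1
  prop := by
    intro t ht s hs
    have h := hprop ![t,1-t] (mem_simplex2 ht.1.le ht.2.le)
      ![s,1-s] (mem_simplex2 hs.1.le hs.2.le)
    simp only [Fin.sum_univ_two, Matrix.cons_val_zero, Matrix.cons_val_one,
      Matrix.head_cons] at h
    show t * ℓ ![t,1-t] 0 + (1-t) * ℓ ![t,1-t] 1 ≤ t * ℓ ![s,1-s] 0 + (1-t) * ℓ ![s,1-s] 1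
    linarith
  mix := hadm.2.2

lemma support_of (hprop : IsProper2 ℓ) {q : Fin 2 → ℝ} (hq : q ∈ simplex2) :
    ∀ s ∈ Set.Ioo (0:ℝ) 1,
      s * tl ℓ 0 s + (1-s) * tl ℓ 1 s ≤ s * ℓ q 0 + (1-s) * ℓ q 1 := by
  intro s hs
  have h := hprop ![s,1-s] (mem_simplex2 hs.1.le hs.2.le) q hq
  simp only [Fin.sum_univ_two, Matrix.cons_val_zero, Matrix.cons_val_one,
    Matrix.head_cons] at h
  show s * ℓ ![s,1-s] 0 + (1-s) * ℓ ![s,1-s] 1 ≤ _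
  linarith

lemma log_bound {z c : ℝ} (hη : 0 < η) (hz : 0 < z) (h : z ≤ Real.exp (-η * c)) :
    c ≤ -Real.log z / η := by
  have h1 : Real.log z ≤ -η * c := (Real.log_le_iff_le_exp hz).mpr h
  rw [le_div_iff₀ hη]
  nlinarith

lemma mem_image_iff (hη : 0 < η) (hrange : ∀ p ∈ simplex2, ∀ i, 0 ≤ ℓ p i)
    {z : Fin 2 → ℝ} :
    z ∈ Eproj2 η '' spr2 ℓ ↔ (∀ i, 0 < z i) ∧
      ∃ q ∈ simplex2, ∀ i, z i ≤ Real.exp (-η * ℓ q i) := by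
  constructor
  · rintro ⟨x, ⟨hx0, q, hq, hxq⟩, rfl⟩
    exact ⟨fun i => Real.exp_pos _, q, hq, fun i =>
      Real.exp_le_exp.mpr (by nlinarith [hxq i, hη])⟩
  · rintro ⟨hz0, q, hq, hzq⟩
    refine ⟨fun i => -Real.log (z i)/η, ⟨fun i => ?_, q, hq, fun i => ?_⟩, ?_⟩
    · have h1 : z i ≤ 1 := le_trans (hzq i)
        (Real.exp_le_one_iff.mpr (by nlinarith [hrange q hq i]))
      have h2 : Real.log (z i) ≤ 0 := Real.log_nonpos (le_of_lt (hz0 i)) h1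
      exact div_nonneg (neg_nonneg.mpr h2) hη.le
    · exact log_bound hη (hz0 i) (hzq i)
    · funext i
      show Real.exp (-η * (-Real.log (z i)/η)) = z i
      rw [show -η * (-Real.log (z i)/η) = Real.log (z i) by field_simp]
      exact Real.exp_log (hz0 i)

lemma curve_mem (hrange : ∀ p ∈ simplex2, ∀ i, 0 ≤ ℓ p i) {s : ℝ}
    (hs : s ∈ Set.Ioo (0:ℝ) 1) :
    Eproj2 η (ℓ ![s, 1-s]) ∈ Eproj2 η '' spr2 ℓ :=
  ⟨ℓ ![s,1-s], ⟨fun i => hrange _ (mem_simplex2 hs.1.le hs.2.le) i,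
    ![s,1-s], mem_simplex2 hs.1.le hs.2.le, fun i => le_refl _⟩, rfl⟩

theorem mixable_iff (hrange : ∀ p ∈ simplex2, ∀ i, 0 ≤ ℓ p i)
    (hadm : IsAdmissible2 ℓ) (hprop : IsProper2 ℓ) (hη : 0 < η) :
    IsMixable2 η ℓ ↔ ∀ t ∈ Set.Ioo (0:ℝ) 1, η * ((1-t) * deriv (tl ℓ 1) t) ≤ 1 := by
  have hc : Core (tl ℓ 0) (tl ℓ 1) := core_of hrange hadm hprop
  constructor
  · intro hconv
    by_contra hcon
    push_neg at hcon
    obtain ⟨t₀, ht₀, hgt⟩ := hcon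
    obtain ⟨s₁, hs₁, s₂, hs₂, hviol⟩ := hc.necessity hη ht₀ hgt
    have hmid := hconv (curve_mem hrange hs₁) (curve_mem hrange hs₂)
      (show (0:ℝ) ≤ 1/2 by norm_num) (show (0:ℝ) ≤ 1/2 by norm_num)
      (show (1:ℝ)/2 + 1/2 = 1 by norm_num)
    rw [mem_image_iff hη hrange] at hmid
    obtain ⟨hpos, q₃, hq₃, hle⟩ := hmid
    have hm0 : (((1:ℝ)/2) • Eproj2 η (ℓ ![s₁, 1-s₁]) + ((1:ℝ)/2) • Eproj2 η (ℓ ![s₂, 1-s₂])) 0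
        = (Ec η (tl ℓ 0) s₁ + Ec η (tl ℓ 0) s₂)/2 := by
      show (1/2 : ℝ) * Real.exp (-η * ℓ ![s₁,1-s₁] 0) +
        (1/2 : ℝ) * Real.exp (-η * ℓ ![s₂,1-s₂] 0) =
        (Real.exp (-η * ℓ ![s₁,1-s₁] 0) + Real.exp (-η * ℓ ![s₂,1-s₂] 0))/2
      ring
    have hm1 : (((1:ℝ)/2) • Eproj2 η (ℓ ![s₁, 1-s₁]) + ((1:ℝ)/2) • Eproj2 η (ℓ ![s₂, 1-s₂])) 1
        = (Ec η (tl ℓ 1) s₁ + Ec η (tl ℓ 1) s₂)/2 := by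
      show (1/2 : ℝ) * Real.exp (-η * ℓ ![s₁,1-s₁] 1) +
        (1/2 : ℝ) * Real.exp (-η * ℓ ![s₂,1-s₂] 1) =
        (Real.exp (-η * ℓ ![s₁,1-s₁] 1) + Real.exp (-η * ℓ ![s₂,1-s₂] 1))/2
      ring
    have hb0 := log_bound hη (hpos 0) (hle 0)
    have hb1 := log_bound hη (hpos 1) (hle 1)
    rw [hm0] at hb0
    rw [hm1] at hb1
    have hsup := support_of hprop hq₃ t₀ ht₀
    have hchain : t₀ * tl ℓ 0 t₀ + (1-t₀) * tl ℓ 1 t₀ ≤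
        t₀ * (-Real.log ((Ec η (tl ℓ 0) s₁ + Ec η (tl ℓ 0) s₂)/2) / η) +
        (1-t₀) * (-Real.log ((Ec η (tl ℓ 1) s₁ + Ec η (tl ℓ 1) s₂)/2) / η) := by
      have e0 := mul_le_mul_of_nonneg_left hb0 ht₀.1.le
      have e1 := mul_le_mul_of_nonneg_left hb1 (by linarith [ht₀.2] : (0:ℝ) ≤ 1 - t₀)
      linarith
    linarith
  · intro hmix
    rw [IsMixable2, convex_iff_forall_pos]
    intro z₁ hz₁ z₂ hz₂ a b ha hb hab
    rw [mem_image_iff hη hrange] at hz₁ hz₂ ⊢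
    obtain ⟨hp₁, q₁, hq₁, hl₁⟩ := hz₁
    obtain ⟨hp₂, q₂, hq₂, hl₂⟩ := hz₂
    have happly : ∀ i, (a • z₁ + b • z₂) i = a * z₁ i + b * z₂ i := fun i => rfl
    refine ⟨fun i => by
      rw [happly]
      exact add_pos (mul_pos ha (hp₁ i)) (mul_pos hb (hp₂ i)), ?_⟩
    obtain ⟨z₀', z₁', hcase, hbd0, hbd1⟩ := hc.q3 hη hmix
      (support_of hprop hq₁) (hrange q₁ hq₁ 0) (hrange q₁ hq₁ 1)
      (support_of hprop hq₂) (hrange q₂ hq₂ 0) (hrange q₂ hq₂ 1) ha hb hab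
    have hcomb0 : a * z₁ 0 + b * z₂ 0 ≤
        a * Real.exp (-η * ℓ q₁ 0) + b * Real.exp (-η * ℓ q₂ 0) :=
      add_le_add (mul_le_mul_of_nonneg_left (hl₁ 0) ha.le)
        (mul_le_mul_of_nonneg_left (hl₂ 0) hb.le)
    have hcomb1 : a * z₁ 1 + b * z₂ 1 ≤
        a * Real.exp (-η * ℓ q₁ 1) + b * Real.exp (-η * ℓ q₂ 1) :=
      add_le_add (mul_le_mul_of_nonneg_left (hl₁ 1) ha.le)
        (mul_le_mul_of_nonneg_left (hl₂ 1) hb.le)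
    rcases hcase with ⟨r, hr, h0eq, h1eq⟩ | ⟨h0eq, h1eq⟩ | ⟨h0eq, h1eq⟩
    · subst h0eq; subst h1eq
      refine ⟨![r, 1-r], mem_simplex2 hr.1.le hr.2.le, fun i => ?_⟩
      fin_cases i
      · rw [happly]
        exact le_trans hcomb0 hbd0
      · rw [happly]
        exact le_trans hcomb1 hbd1
    · subst h0eq; subst h1eq
      refine ⟨q₁, hq₁, fun i => ?_⟩
      fin_cases i
      · rw [happly]; exact le_trans hcomb0 hbd0
      · rw [happly]; exact le_trans hcomb1 hbd1
    · subst h0eq; subst h1eq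
      refine ⟨q₂, hq₂, fun i => ?_⟩
      fin_cases i
      · rw [happly]; exact le_trans hcomb0 hbd0
      · rw [happly]; exact le_trans hcomb1 hbd1

lemma mixRatio_eq (hrange : ∀ p ∈ simplex2, ∀ i, 0 ≤ ℓ p i)
    (hadm : IsAdmissible2 ℓ) (hprop : IsProper2 ℓ) {t : ℝ} (ht : t ∈ Set.Ioo (0:ℝ) 1) :
    mixRatio ℓ t = 1 / ((1-t) * deriv (tl ℓ 1) t) := by
  have hc : Core (tl ℓ 0) (tl ℓ 1) := core_of hrange hadm hprop
  set a := deriv (tl ℓ 0) t with hadef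
  set b := deriv (tl ℓ 1) t with hbdef
  set A := deriv (deriv (tl ℓ 0)) t with hAdef
  set B := deriv (deriv (tl ℓ 1)) t with hBdef
  have hSt : t * a + (1-t) * b = 0 := hc.stat t ht
  have hD2 : a + t * A - b + (1-t) * B = 0 := hc.stat' t ht
  have haneg : a < 0 := hc.dfneg t ht
  have hbpos : 0 < b := hc.dgpos t ht
  have h1t : 0 < 1 - t := by linarith [ht.2]
  have key : (1-t) * (a*B - b*A) = a*(b - a) := by linear_combination a * hD2 - A * hSt
  have hne : a * b * (a - b) ≠ 0 := by
    apply ne_of_gt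
    have : a * b < 0 := mul_neg_of_neg_of_pos haneg hbpos
    nlinarith
  have hval : (a*B - b*A) / (a*(b*(a-b))) = -(1/((1-t)*b)) := by
    rw [div_eq_iff (by rw [show a*(b*(a-b)) = a*b*(a-b) by ring]; exact hne)]
    have h1t' : (1-t)*b ≠ 0 := (mul_pos h1t hbpos).ne'
    have e : -(1/((1-t)*b)) * (a*(b*(a-b))) = -(a*(b*(a-b)))/((1-t)*b) := by ring
    rw [e, eq_div_iff h1t']
    linear_combination b * key
  rw [mixRatio]
  rw [show deriv (tl ℓ 0) t * deriv (deriv (tl ℓ 1)) t -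
      deriv (tl ℓ 1) t * deriv (deriv (tl ℓ 0)) t = a*B - b*A from rfl]
  rw [show deriv (tl ℓ 0) t * deriv (tl ℓ 1) t *
      (deriv (tl ℓ 0) t - deriv (tl ℓ 1) t) = a*(b*(a-b)) by ring]
  rw [hval, abs_neg, abs_of_pos (by positivity)]

end Bridge

/-- For an admissible proper binary loss: if `ℓ` is mixable its
mixability constant is `inf_{t∈(0,1)} mixRatio ℓ t`; conversely if this infimum is
positive then `ℓ` is mixable with that mixability constant; and for every `η > 0`,
`E_η(spr(ℓ))` is convex iff `η ≤ inf_{t∈(0,1)} mixRatio ℓ t`. -/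
theorem mixability_constant_formula (ℓ : (Fin 2 → ℝ) → Fin 2 → ℝ)
    (hrange : ∀ p ∈ simplex2, ∀ i, 0 ≤ ℓ p i)
    (hadm : IsAdmissible2 ℓ) (hprop : IsProper2 ℓ) :
    ((∃ η > 0, IsMixable2 η ℓ) →
        sSup {η : ℝ | 0 < η ∧ IsMixable2 η ℓ} = sInf (mixRatio ℓ '' Set.Ioo 0 1)) ∧
      (0 < sInf (mixRatio ℓ '' Set.Ioo 0 1) →
        (∃ η > 0, IsMixable2 η ℓ) ∧
          sSup {η : ℝ | 0 < η ∧ IsMixable2 η ℓ} = sInf (mixRatio ℓ '' Set.Ioo 0 1)) ∧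
      (∀ η : ℝ, 0 < η →
        (IsMixable2 η ℓ ↔ η ≤ sInf (mixRatio ℓ '' Set.Ioo 0 1))) := by
  have hc : Core (tl ℓ 0) (tl ℓ 1) := core_of hrange hadm hprop
  have hne : (mixRatio ℓ '' Set.Ioo 0 1).Nonempty :=
    ⟨mixRatio ℓ (1/2), mem_image_of_mem _ (by norm_num)⟩
  have hbdd : BddBelow (mixRatio ℓ '' Set.Ioo 0 1) := by
    refine ⟨0, ?_⟩
    rintro y ⟨t, ht, rfl⟩
    exact abs_nonneg _
  have hIchar : ∀ η : ℝ, 0 < η →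
      (η ≤ sInf (mixRatio ℓ '' Set.Ioo 0 1) ↔
        ∀ t ∈ Set.Ioo (0:ℝ) 1, η * ((1-t) * deriv (tl ℓ 1) t) ≤ 1) := by
    intro η hη
    constructor
    · intro h t ht
      have h1 : η ≤ mixRatio ℓ t :=
        le_trans h (csInf_le hbdd (mem_image_of_mem _ ht))
      rw [mixRatio_eq hrange hadm hprop ht] at h1
      have hpos : 0 < (1-t) * deriv (tl ℓ 1) t :=
        mul_pos (by linarith [ht.2]) (hc.dgpos t ht)
      have := (le_div_iff₀ hpos).mp h1
      linarith
    · intro h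
      apply le_csInf hne
      rintro y ⟨t, ht, rfl⟩
      rw [mixRatio_eq hrange hadm hprop ht]
      have hpos : 0 < (1-t) * deriv (tl ℓ 1) t :=
        mul_pos (by linarith [ht.2]) (hc.dgpos t ht)
      rw [le_div_iff₀ hpos]
      linarith [h t ht]
  have hC : ∀ η : ℝ, 0 < η →
      (IsMixable2 η ℓ ↔ η ≤ sInf (mixRatio ℓ '' Set.Ioo 0 1)) := fun η hη =>
    (mixable_iff hrange hadm hprop hη).trans (hIchar η hη).symm
  have hSeq : 0 < sInf (mixRatio ℓ '' Set.Ioo 0 1) →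
      {η : ℝ | 0 < η ∧ IsMixable2 η ℓ} = Set.Ioc 0 (sInf (mixRatio ℓ '' Set.Ioo 0 1)) := by
    intro hI
    ext η
    simp only [Set.mem_setOf_eq, Set.mem_Ioc]
    constructor
    · rintro ⟨h1, h2⟩
      exact ⟨h1, (hC η h1).mp h2⟩
    · rintro ⟨h1, h2⟩
      exact ⟨h1, (hC η h1).mpr h2⟩
  refine ⟨?_, ?_, fun η hη => hC η hη⟩
  · rintro ⟨η₀, hη₀, hmix₀⟩
    have hI : 0 < sInf (mixRatio ℓ '' Set.Ioo 0 1) :=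
      lt_of_lt_of_le hη₀ ((hC η₀ hη₀).mp hmix₀)
    rw [hSeq hI]
    exact csSup_Ioc hI
  · intro hI
    refine ⟨⟨sInf (mixRatio ℓ '' Set.Ioo 0 1), hI,
      (hC _ hI).mpr (le_refl _)⟩, ?_⟩
    rw [hSeq hI]
    exact csSup_Ioc hI
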